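/- Let M(x) be a univariate parametric Markov chain on states S with polynomial transition probabilities of degree at most d, and let the set of admissible valuations X be nonempty. For a target set T, the reachability probability Pr^{M(x)}_s(◇T), as a function X → [0,1], coincides on X with a rational function f_s(x)/g_s(x) where f_s, g_s ∈ ℚ[x] have degree at most n·d, with n = |S|, and g_s(ξ) ≠ 0 for all ξ ∈ X. -/

import Mathlib

/-!
Let `U` be the set of states outside `T` from which `T` can be reached. The reachability
probabilities solve the linear system `(I - P_U) p = 1_T`, where `P_U` keeps the rows of `P`
indexed by `U` and zeroes the others. This system is nonsingular: a vector in its kernel is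
harmonic on `U` and vanishes off `U`, and at a state where its modulus is maximal the modulus
stays maximal along every transition, hence along a path from `U` to `T`, where the vector
vanishes. All admissible valuations give `P` the same support, so `U` and the polynomial
matrix of the system do not depend on `ξ`, and Cramer's rule writes `p_s` as a quotient of two
`n × n` determinants whose entries have degree at most `d`.
-/

open scoped Classical
open Polynomial

/-- Probability of reaching `T` within `n` steps, starting from `s`. -/
noncomputable def reachN {S : Type*} [Fintype S] (P : S → S → ℝ) (T : Set S) :
    ℕ → S → ℝ
  | 0, s => if s ∈ T then 1 else 0
  | n + 1, s => if s ∈ T then 1 else ∑ t, P s t * reachN P T n t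

/-- Probability of eventually reaching `T` from `s`. -/
noncomputable def reachProb {S : Type*} [Fintype S] (P : S → S → ℝ) (T : Set S) (s : S) :
    ℝ :=
  ⨆ n, reachN P T n s

open Matrix Relation

section Reachability

variable {S : Type*} [Fintype S] {P : S → S → ℝ} {T : Set S}

lemma reachN_nonneg (hP0 : ∀ a b, 0 ≤ P a b) (m : ℕ) (s : S) : 0 ≤ reachN P T m s := by
  induction m generalizing s with
  | zero => unfold reachN; split_ifs <;> norm_num
  | succ k ih =>
    unfold reachN; split_ifs
    · exact zero_le_one
    · exact Finset.sum_nonneg fun t _ => mul_nonneg (hP0 s t) (ih t)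

lemma reachN_le_one (hP0 : ∀ a b, 0 ≤ P a b) (hP1 : ∀ a, ∑ b, P a b ≤ 1) (m : ℕ) (s : S) :
    reachN P T m s ≤ 1 := by
  induction m generalizing s with
  | zero => unfold reachN; split_ifs <;> norm_num
  | succ k ih =>
    unfold reachN; split_ifs
    · exact le_rfl
    · calc ∑ t, P s t * reachN P T k t ≤ ∑ t, P s t :=
            Finset.sum_le_sum fun t _ => mul_le_of_le_one_right (hP0 s t) (ih t)
        _ ≤ 1 := hP1 s

lemma reachN_le_succ (hP0 : ∀ a b, 0 ≤ P a b) (m : ℕ) (s : S) :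
    reachN P T m s ≤ reachN P T (m + 1) s := by
  induction m generalizing s with
  | zero =>
    unfold reachN; split_ifs
    · exact le_rfl
    · exact Finset.sum_nonneg fun t _ => mul_nonneg (hP0 s t) (reachN_nonneg hP0 0 t)
  | succ k ih =>
    unfold reachN; split_ifs
    · exact le_rfl
    · exact Finset.sum_le_sum fun t _ => mul_le_mul_of_nonneg_left (ih t) (hP0 s t)

lemma tendsto_reachN (hP0 : ∀ a b, 0 ≤ P a b) (hP1 : ∀ a, ∑ b, P a b ≤ 1) (s : S) :
    Filter.Tendsto (reachN P T · s) Filter.atTop (nhds (reachProb P T s)) :=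
  tendsto_atTop_ciSup (monotone_nat_of_le_succ fun m => reachN_le_succ hP0 m s)
    ⟨1, by rintro x ⟨m, rfl⟩; exact reachN_le_one hP0 hP1 m s⟩

lemma reachProb_eq (hP0 : ∀ a b, 0 ≤ P a b) (hP1 : ∀ a, ∑ b, P a b ≤ 1) (s : S) :
    reachProb P T s = if s ∈ T then 1 else ∑ t, P s t * reachProb P T t := by
  refine tendsto_nhds_unique
    ((tendsto_reachN hP0 hP1 s).comp (Filter.tendsto_add_atTop_nat 1)) ?_
  simp only [Function.comp_def, reachN]
  split_ifs
  · exact tendsto_const_nhds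
  · exact tendsto_finsetSum _ fun t _ => tendsto_const_nhds.mul (tendsto_reachN hP0 hP1 t)

lemma reachProb_of_mem {s : S} (hs : s ∈ T) : reachProb P T s = 1 := by
  have h : ∀ m, reachN P T m s = 1 := by rintro (_ | _) <;> simp [reachN, hs]
  simp [reachProb, h]

lemma reachN_eq_zero_of_not_reach (m : ℕ) {s : S}
    (hs : ∀ t ∈ T, ¬ ReflTransGen (fun a b => P a b ≠ 0) s t) : reachN P T m s = 0 := by
  induction m generalizing s with
  | zero => simp [reachN, show s ∉ T from fun h => hs s h .refl]
  | succ k ih =>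
    rw [reachN, if_neg fun h => hs s h .refl]
    refine Finset.sum_eq_zero fun t _ => ?_
    by_cases hst : P s t = 0
    · rw [hst, zero_mul]
    · rw [ih fun t' ht' hpath => hs t' ht' (hpath.head hst), mul_zero]

lemma reachProb_eq_zero_of_not_reach {s : S}
    (hs : ∀ t ∈ T, ¬ ReflTransGen (fun a b => P a b ≠ 0) s t) : reachProb P T s = 0 := by
  simp [reachProb, reachN_eq_zero_of_not_reach _ hs]

end Reachability

section Graph

variable {S : Type*}

def reachingStates {α : Type*} [Zero α] (A : S → S → α) (T : Set S) : Set S :=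
  {s | s ∉ T ∧ ∃ t ∈ T, ReflTransGen (fun a b => A a b ≠ 0) s t}

lemma reachingStates_congr {α β : Type*} [Zero α] [Zero β] {A : S → S → α} {B : S → S → β}
    (h : ∀ a b, A a b ≠ 0 ↔ B a b ≠ 0) (T : Set S) :
    reachingStates A T = reachingStates B T := by
  rw [reachingStates, show (fun a b => A a b ≠ 0) = fun a b => B a b ≠ 0 from
    funext₂ fun a b => propext (h a b)]
  rfl

end Graph

section MaximumPrinciple

variable {S : Type*} [Fintype S] {P : S → S → ℝ}

lemma abs_eq_of_harmonic_at_max (hP0 : ∀ a b, 0 ≤ P a b) (hP1 : ∀ a, ∑ b, P a b ≤ 1)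
    {w : S → ℝ} {s t : S} (hmax : ∀ x, |w x| ≤ |w s|) (hs : w s = ∑ x, P s x * w x)
    (hst : P s t ≠ 0) : |w t| = |w s| := by
  set m := |w s|
  have hsum : ∑ x, P s x * (m - |w x|) = 0 := by
    refine le_antisymm ?_ (Finset.sum_nonneg fun x _ =>
      mul_nonneg (hP0 s x) (sub_nonneg.2 (hmax x)))
    have hm : m ≤ ∑ x, P s x * |w x| := calc
      m = |∑ x, P s x * w x| := by rw [← hs]
      _ ≤ ∑ x, |P s x * w x| := Finset.abs_sum_le_sum_abs _ _
      _ = ∑ x, P s x * |w x| := by simp_rw [abs_mul, abs_of_nonneg (hP0 s _)]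
    calc ∑ x, P s x * (m - |w x|) = (∑ x, P s x) * m - ∑ x, P s x * |w x| := by
          rw [Finset.sum_mul, ← Finset.sum_sub_distrib]; simp_rw [mul_sub]
      _ ≤ 0 := by nlinarith [hP1 s, abs_nonneg (w s)]
  have ht := (Finset.sum_eq_zero_iff_of_nonneg fun x _ =>
    mul_nonneg (hP0 s x) (sub_nonneg.2 (hmax x))).1 hsum t (Finset.mem_univ t)
  linarith [(mul_eq_zero.1 ht).resolve_left hst]

lemma eq_zero_of_harmonic_on (hP0 : ∀ a b, 0 ≤ P a b) (hP1 : ∀ a, ∑ b, P a b ≤ 1) {U : Set S}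
    (hU : ∀ u ∈ U, ∃ t ∉ U, ReflTransGen (fun a b => P a b ≠ 0) u t) {w : S → ℝ}
    (hw_off : ∀ s ∉ U, w s = 0) (hw : ∀ u ∈ U, w u = ∑ t, P u t * w t) : w = 0 := by
  by_contra hne
  obtain ⟨s₀, hs₀⟩ := Function.ne_iff.1 hne
  have : Nonempty S := ⟨s₀⟩
  obtain ⟨s, hmax⟩ := Finite.exists_max fun x => |w x|
  have hpos : 0 < |w s| := (abs_pos.2 hs₀).trans_le (hmax s₀)
  have mem_of_max {x : S} (hx : |w x| = |w s|) : x ∈ U := by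
    by_contra hxU
    rw [hw_off x hxU, abs_zero] at hx
    exact hpos.ne hx
  obtain ⟨t, htU, hpath⟩ := hU s (mem_of_max rfl)
  have hmax_t : |w t| = |w s| := by
    clear htU
    induction hpath with
    | refl => rfl
    | tail _ hxy ih =>
      rw [← ih]
      exact abs_eq_of_harmonic_at_max hP0 hP1 (ih ▸ hmax) (hw _ (mem_of_max ih)) hxy
  exact htU (mem_of_max hmax_t)

end MaximumPrinciple
section LinearSystem

variable {S R : Type*} [CommRing R]

noncomputable def reachMatrix (U : Set S) (A : S → S → R) : Matrix S S R :=
  1 - of fun s t => if s ∈ U then A s t else 0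

lemma reachMatrix_mulVec_apply [Fintype S] (U : Set S) (A : S → S → R) (v : S → R) (s : S) :
    (reachMatrix U A *ᵥ v) s = v s - if s ∈ U then ∑ t, A s t * v t else 0 := by
  rw [reachMatrix, sub_mulVec, one_mulVec, Pi.sub_apply]
  congr 1
  split_ifs <;> simp [mulVec, dotProduct, *]

lemma map_reachMatrix {R' F : Type*} [CommRing R'] [FunLike F R R'] [RingHomClass F R R']
    (f : F) (U : Set S) (A : S → S → R) :
    (reachMatrix U A).map f = reachMatrix U fun a b => f (A a b) := by
  ext s t
  simp only [reachMatrix, Matrix.map_apply, Matrix.sub_apply, of_apply, one_apply]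
  split_ifs <;> simp

lemma natDegree_reachMatrix_le {U : Set S} {A : S → S → R[X]} {d : ℕ}
    (hA : ∀ a b, (A a b).natDegree ≤ d) (s t : S) : (reachMatrix U A s t).natDegree ≤ d := by
  simp only [reachMatrix, Matrix.sub_apply, of_apply, one_apply]
  split_ifs
  · exact (natDegree_sub_le _ _).trans (max_le (by simp) (hA s t))
  all_goals simp [hA]

lemma det_reachMatrix_ne_zero [Fintype S] [DecidableEq S] {P : S → S → ℝ} (hP0 : ∀ a b, 0 ≤ P a b)
    (hP1 : ∀ a, ∑ b, P a b ≤ 1) (T : Set S) : (reachMatrix (reachingStates P T) P).det ≠ 0 := by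
  intro h
  obtain ⟨v, hv0, hv⟩ := exists_mulVec_eq_zero_iff.2 h
  have hv_apply (s : S) := congrFun hv s
  simp only [reachMatrix_mulVec_apply, Pi.zero_apply, sub_eq_zero] at hv_apply
  refine hv0 (eq_zero_of_harmonic_on hP0 hP1 (U := reachingStates P T) ?_
    (fun s hs => by simpa [hs] using hv_apply s) fun s hs => by simpa [hs] using hv_apply s)
  rintro u ⟨-, t, ht, hpath⟩
  exact ⟨t, fun htU => htU.1 ht, hpath⟩

lemma reachMatrix_mulVec_reachProb [Fintype S] {P : S → S → ℝ} (hP0 : ∀ a b, 0 ≤ P a b)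
    (hP1 : ∀ a, ∑ b, P a b ≤ 1) (T : Set S) :
    reachMatrix (reachingStates P T) P *ᵥ reachProb P T = fun s => if s ∈ T then 1 else 0 := by
  funext s
  rw [reachMatrix_mulVec_apply]
  by_cases hU : s ∈ reachingStates P T
  · rw [if_pos hU, if_neg hU.1, reachProb_eq hP0 hP1 s, if_neg hU.1, sub_self]
  · rw [if_neg hU, sub_zero]
    by_cases hT : s ∈ T
    · rw [if_pos hT, reachProb_of_mem hT]
    · rw [if_neg hT]
      exact reachProb_eq_zero_of_not_reach fun t ht hpath => hU ⟨hT, t, ht, hpath⟩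

end LinearSystem

section Determinants

variable {ι R : Type*} [Fintype ι] [DecidableEq ι] [CommRing R]

lemma Matrix.cramer_mulVec (A : Matrix ι ι R) (x : ι → R) : A.cramer (A *ᵥ x) = A.det • x := by
  rw [cramer_eq_adjugate_mulVec, mulVec_mulVec, adjugate_mul, smul_mulVec, one_mulVec]

lemma eq_det_updateCol_div_det_of_map {K F : Type*} [Field K] [FunLike F R K]
    [RingHomClass F R K] (f : F) {A : Matrix ι ι R} {b : ι → R} {x : ι → K}
    (hx : A.map f *ᵥ x = f ∘ b) (hA : f A.det ≠ 0) (i : ι) :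
    x i = f (A.updateCol i b).det / f A.det := by
  have h := congrFun ((A.map f).cramer_mulVec x) i
  have map_det (M : Matrix ι ι R) : f M.det = (M.map f).det := by
    simpa using RingHom.map_det (f : R →+* K) M
  rw [hx, cramer_apply, ← map_updateCol, Pi.smul_apply, smul_eq_mul, ← map_det, ← map_det] at h
  rw [h, mul_div_cancel_left₀ _ hA]

lemma natDegree_det_le {M : Matrix ι ι R[X]} {d : ℕ} (h : ∀ i j, (M i j).natDegree ≤ d) :
    M.det.natDegree ≤ Fintype.card ι * d := by
  rw [det_apply']
  refine natDegree_sum_le_of_forall_le _ _ fun σ _ => ?_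
  calc ((Equiv.Perm.sign σ : ℤ) * ∏ i, M (σ i) i : R[X]).natDegree
      ≤ ((Equiv.Perm.sign σ : ℤ) : R[X]).natDegree + (∏ i, M (σ i) i).natDegree :=
        natDegree_mul_le
    _ ≤ 0 + ∑ i, (M (σ i) i).natDegree := add_le_add (natDegree_intCast _).le (natDegree_prod_le _ _)
    _ ≤ ∑ _i : ι, d := by rw [zero_add]; exact Finset.sum_le_sum fun i _ => h _ _
    _ = Fintype.card ι * d := by simp

end Determinants

theorem univariate_reach_rational_function_general (n d : ℕ)
    (P : Fin n → Fin n → Polynomial ℚ)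
    (hd : ∀ s t, (P s t).natDegree ≤ d)
    (X : Set ℝ)
    (hadm : ∀ ξ ∈ X,
      (∀ s t, (0 < aeval ξ (P s t) ↔ P s t ≠ 0) ∧ 0 ≤ aeval ξ (P s t)) ∧
      (∀ s, ∑ t, aeval ξ (P s t) = 1)) :
    ∀ (s : Fin n) (T : Set (Fin n)), ∃ f g : Polynomial ℚ,
      f.natDegree ≤ n * d ∧ g.natDegree ≤ n * d ∧
      ∀ ξ ∈ X, aeval ξ g ≠ 0 ∧
        reachProb (fun a b => aeval ξ (P a b)) T s = aeval ξ f / aeval ξ g := by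
  intro s T
  set M : Matrix (Fin n) (Fin n) ℚ[X] := reachMatrix (reachingStates P T) P
  set b : Fin n → ℚ[X] := fun t => if t ∈ T then 1 else 0
  have hM : ∀ i j, (M i j).natDegree ≤ d := natDegree_reachMatrix_le hd
  have hb (i : Fin n) : (b i).natDegree ≤ d := by
    simp only [b]
    split_ifs <;> simp
  have hMb (i j : Fin n) : (M.updateCol s b i j).natDegree ≤ d := by
    rw [updateCol_apply]
    split_ifs
    exacts [hb i, hM i j]
  refine ⟨(M.updateCol s b).det, M.det, by simpa using natDegree_det_le hMb,
    by simpa using natDegree_det_le hM, fun ξ hξ => ?_⟩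
  obtain ⟨hsupp, hrow⟩ := hadm ξ hξ
  have hP0 (a b : Fin n) : 0 ≤ aeval ξ (P a b) := (hsupp a b).2
  have hP1 (a : Fin n) : ∑ b, aeval ξ (P a b) ≤ 1 := (hrow a).le
  have hsupport (a b : Fin n) : aeval ξ (P a b) ≠ 0 ↔ P a b ≠ 0 :=
    ⟨fun h hP => h (by simp [hP]), fun h => ((hsupp a b).1.2 h).ne'⟩
  have hMξ : M.map (aeval ξ) = reachMatrix (reachingStates (fun a b => aeval ξ (P a b)) T)
      (fun a b => aeval ξ (P a b)) := by
    rw [map_reachMatrix, reachingStates_congr hsupport]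
  have hdet : aeval ξ M.det ≠ 0 := by
    rw [AlgHom.map_det, AlgHom.mapMatrix_apply, hMξ]
    exact det_reachMatrix_ne_zero hP0 hP1 T
  refine ⟨hdet, eq_det_updateCol_div_det_of_map (aeval ξ) ?_ hdet s⟩
  rw [hMξ, reachMatrix_mulVec_reachProb hP0 hP1]
  funext t
  simp [b, apply_ite (aeval ξ)]

/-- Let `M(x)` be a univariate parametric Markov chain on `n` states
with polynomial transition probabilities of degree at most `d`, with a nonempty set `X`
of admissible valuations. Then for every state `s` and target set `T`, the reachability
probability `Pr^{M(ξ)}_s(◇T)` coincides on `X` with a rational function `f_s(ξ)/g_s(ξ)`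
where `f_s, g_s ∈ ℚ[x]` have degree at most `n·d` and `g_s` does not vanish on `X`. -/
theorem univariate_reach_rational_function (n d : ℕ)
    (P : Fin n → Fin n → Polynomial ℚ)
    (hd : ∀ s t, (P s t).natDegree ≤ d)
    (X : Set ℝ) (hX : X.Nonempty)
    (hadm : ∀ ξ ∈ X,
      (∀ s t, (0 < aeval ξ (P s t) ↔ P s t ≠ 0) ∧ 0 ≤ aeval ξ (P s t)) ∧
      (∀ s, ∑ t, aeval ξ (P s t) = 1)) :
    ∀ (s : Fin n) (T : Set (Fin n)), ∃ f g : Polynomial ℚ,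
      f.natDegree ≤ n * d ∧ g.natDegree ≤ n * d ∧
      ∀ ξ ∈ X, aeval ξ g ≠ 0 ∧
        reachProb (fun a b => aeval ξ (P a b)) T s = aeval ξ f / aeval ξ g :=
  univariate_reach_rational_function_general n d P hd X hadm
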